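/- arXiv:2305.00963 — 8 statements merged into one kernel-verified Lean document; each statement's English description precedes it below -/
import Mathlib

section
/- Let w₁, …, w_m be real numbers (left endpoints of unit intervals) and consider a chain of relations w₁ ◁ w₂ ◁ ⋯ ◁ w_m where each ◁ is either ≺ (meaning w_i + 1 ≤ w_{i+1}) or → (meaning w_i < w_{i+1} + 1). If the number r of ≺-symbols and the number s of →-symbols satisfy r ≥ s, then the chain cannot hold (such a sequence is impossible). -/
/-! Going once around the cycle, the increments `w (i + 1) - w i` sum to `0`. But each `≺` step
increases `w` by at least `1` and each `→` step decreases it by less than `1`, so with at least as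
many `≺` as `→` steps the total increase is positive. -/

open Finset

theorem Function.Periodic.sum_range_sub_eq_zero {w : ℕ → ℝ} {m : ℕ} (hw : Function.Periodic w m) :
    ∑ i ∈ range m, (w (i + 1) - w i) = 0 := by
  rw [sum_range_sub, show w m = w (0 + m) by rw [zero_add], hw, sub_self]

theorem card_filter_le_sum_of_one_le {ι : Type*} (s : Finset ι) (p : ι → Prop) [DecidablePred p]
    (f : ι → ℝ) (hf : ∀ i ∈ s, p i → 1 ≤ f i) :
    (#(s.filter p) : ℝ) ≤ ∑ i ∈ s.filter p, f i := by
  simpa using sum_le_sum fun i hi => hf i (mem_filter.1 hi).1 (mem_filter.1 hi).2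

theorem sum_pos_of_card_false_le_card_true {ι : Type*} {s : Finset ι} (hs : s.Nonempty)
    (b : ι → Bool) (f : ι → ℝ) (hf : ∀ i ∈ s, if b i then 1 ≤ f i else -1 < f i)
    (hcard : #(s.filter fun i => b i = false) ≤ #(s.filter fun i => b i = true)) :
    0 < ∑ i ∈ s, f i := by
  set T := s.filter fun i => b i = true
  set F := s.filter fun i => b i = false
  have hsplit : ∑ i ∈ s, f i = ∑ i ∈ T, f i + ∑ i ∈ F, f i := by
    simpa [T, F] using (sum_filter_add_sum_filter_not s (fun i => b i = true) f).symm
  have hT : (#T : ℝ) ≤ ∑ i ∈ T, f i :=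
    card_filter_le_sum_of_one_le s _ f fun i hi hbi => by simpa [hbi] using hf i hi
  have hcard' : (#F : ℝ) ≤ #T := by exact_mod_cast hcard
  rcases F.eq_empty_or_nonempty with hF | hF
  · have hTs : T = s := filter_true_of_mem fun i hi => by simpa using filter_eq_empty_iff.1 hF hi
    have : (0 : ℝ) < #T := by rw [hTs]; exact_mod_cast hs.card_pos
    rw [hsplit, hF, sum_empty]
    linarith
  · have hFlt : ∑ _i ∈ F, (-1 : ℝ) < ∑ i ∈ F, f i :=
      sum_lt_sum_of_nonempty hF fun i hi => by
        obtain ⟨his, hbi⟩ := mem_filter.1 hi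
        simpa [hbi] using hf i his
    rw [sum_const, nsmul_eq_mul, mul_neg_one] at hFlt
    linarith

/-- A cyclic chain of relations `w₁ ◁ w₂ ◁ ⋯ ◁ w_m ◁ w₁`, where each `◁` is either
`≺` (`w i + 1 ≤ w (i+1)`, recorded by `rel i = true`) or `→` (`w i < w (i+1) + 1`,
recorded by `rel i = false`), is impossible whenever the number `r` of `≺`-symbols
is at least the number `s` of `→`-symbols.  The sequence is encoded as a
`m`-periodic function `w : ℕ → ℝ`. -/
theorem impossible_cyclic_chain (m : ℕ) (hm : 0 < m) (w : ℕ → ℝ)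
    (hper : ∀ i, w (i + m) = w i) (rel : ℕ → Bool)
    (hchain : ∀ i < m, if rel i then w i + 1 ≤ w (i + 1) else w i < w (i + 1) + 1)
    (hcount : ((Finset.range m).filter (fun i => rel i = false)).card ≤
      ((Finset.range m).filter (fun i => rel i = true)).card) :
    False := by
  have hincr : ∀ i ∈ range m, if rel i then 1 ≤ w (i + 1) - w i else -1 < w (i + 1) - w i := by
    intro i hi
    have := hchain i (mem_range.1 hi)
    split_ifs at this ⊢ <;> linarith
  have hpos := sum_pos_of_card_false_le_card_true (nonempty_range_iff.2 hm.ne') rel _ hincr hcount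
  have hzero := Function.Periodic.sum_range_sub_eq_zero hper
  linarith
end

section
/- Let w be an N-Escher in a UIO U with N = n + k (indices mod N, k ≥ 1, n ≥ 1). Then for any index m, it is impossible that both w_{m+k} ≻ w_{m+1} and w_m ≻ w_{m+k+1} hold. Hence exactly one of the following holds: (1) w_{m+k} → w_{m+1} and w_m → w_{m+k+1}; (2) w_{m+k} ≻ w_{m+1} and w_m → w_{m+k+1}; (3) w_{m+k} → w_{m+1} and w_m ≻ w_{m+k+1}. -/
/-- An `m`-Escher in a UIO `U` (a finite set of reals, viewed as left endpoints of unit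
intervals), encoded as an `m`-periodic sequence `w : ℕ → ℝ` of elements of `U`, pairwise
distinct within a period, with `w i → w (i+1)` (i.e. `w i < w (i+1) + 1`) for all `i`. -/
def IsEscher (U : Finset ℝ) (m : ℕ) (w : ℕ → ℝ) : Prop :=
  (∀ i, w (i + m) = w i) ∧ (∀ i, w i ∈ U) ∧
  (∀ i j, i < m → j < m → w i = w j → i = j) ∧ (∀ i, w i < w (i + 1) + 1)

/-- Chaining the two arrows with the two strict precedences closes the cycle
`a < a' + 1 ≤ b < b' + 1 ≤ a`. -/
theorem not_le_and_le_of_lt_add_one {a a' b b' : ℝ} (ha : a < a' + 1) (hb : b < b' + 1) :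
    ¬(a' + 1 ≤ b ∧ b' + 1 ≤ a) := by
  rintro ⟨hab, hba⟩
  linarith

theorem lt_and_lt_or_le_and_lt_or_lt_and_le {α : Type*} [LinearOrder α] {x y x' y' : α}
    (h : ¬(y ≤ x ∧ y' ≤ x')) :
    (x < y ∧ x' < y') ∨ (y ≤ x ∧ x' < y') ∨ (x < y ∧ y' ≤ x') := by
  rcases lt_or_ge x y with hxy | hyx <;> rcases lt_or_ge x' y' with hxy' | hyx' <;> tauto

theorem escher_trichotomy_general (U : Finset ℝ) (n k : ℕ)
    (w : ℕ → ℝ) (hw : IsEscher U (n + k) w) (m : ℕ) :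
    ¬(w (m + 1) + 1 ≤ w (m + k) ∧ w (m + k + 1) + 1 ≤ w m) ∧
    ((w (m + k) < w (m + 1) + 1 ∧ w m < w (m + k + 1) + 1) ∨
     (w (m + 1) + 1 ≤ w (m + k) ∧ w m < w (m + k + 1) + 1) ∨
     (w (m + k) < w (m + 1) + 1 ∧ w (m + k + 1) + 1 ≤ w m)) := by
  have hstep : ∀ i, w i < w (i + 1) + 1 := hw.2.2.2
  have hnot := not_le_and_le_of_lt_add_one (hstep m) (hstep (m + k))
  exact ⟨hnot, lt_and_lt_or_le_and_lt_or_lt_and_le hnot⟩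

/-- For an `(n+k)`-Escher `w` and any index `m`, it is impossible that both
`w (m+k) ≻ w (m+1)` and `w m ≻ w (m+k+1)`; hence exactly one of the three cases
(1) `w (m+k) → w (m+1)` and `w m → w (m+k+1)`,
(2) `w (m+k) ≻ w (m+1)` and `w m → w (m+k+1)`,
(3) `w (m+k) → w (m+1)` and `w m ≻ w (m+k+1)` holds. -/
theorem escher_trichotomy (U : Finset ℝ) (n k : ℕ) (hn : 1 ≤ n) (hk : 1 ≤ k)
    (w : ℕ → ℝ) (hw : IsEscher U (n + k) w) (m : ℕ) :
    ¬(w (m + 1) + 1 ≤ w (m + k) ∧ w (m + k + 1) + 1 ≤ w m) ∧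
    ((w (m + k) < w (m + 1) + 1 ∧ w m < w (m + k + 1) + 1) ∨
     (w (m + 1) + 1 ≤ w (m + k) ∧ w m < w (m + k + 1) + 1) ∨
     (w (m + k) < w (m + 1) + 1 ∧ w (m + k + 1) + 1 ≤ w m)) :=
  escher_trichotomy_general U n k w hw m
end

section
/- Every (n+k)-Escher w in a UIO has a valid k-subEscher: there exists an index i (mod n+k) such that [w_{i+1}, …, w_{i+k}] is a k-Escher and [w_{i+k+1}, …, w_i] is an n-Escher. -/
/-!
Put `d i = w (i + k) - w i`. A valid subEscher sits at any `i` with `d i ≤ 0 ≤ d (i + 1)`, since then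
`w (i + k) ≤ w i < w (i + 1) + 1 ≤ w (i + k + 1) + 1`. As `w` is periodic, `d` sums to zero over a
period, so it is somewhere nonpositive; and if a nonpositive value of `d` always forced a negative
one right after it, `d` would be negative on a whole period, again contradicting the zero sum.
-/

open Finset Function

theorem Function.Periodic.sum_range_comp_add {M : Type*} [AddCommMonoid M] {f : ℕ → M} {N : ℕ}
    (hf : Periodic f N) (a : ℕ) : ∑ t ∈ range N, f (a + t) = ∑ t ∈ range N, f t := by
  induction a with
  | zero => simp
  | succ a ih =>
    rw [← ih]
    cases N with
    | zero => simp
    | succ N =>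
      have hwrap : f (a + 1 + N) = f (a + 0) := by
        rw [add_assoc, add_comm 1 N, hf, add_zero]
      rw [sum_range_succ, sum_range_succ', hwrap]
      simp only [add_assoc, add_comm 1]

theorem Function.Periodic.sum_range_sub_comp_add {G : Type*} [AddCommGroup G] {f : ℕ → G} {N : ℕ}
    (hf : Periodic f N) (k : ℕ) : ∑ t ∈ range N, (f (t + k) - f t) = 0 := by
  simp only [sum_sub_distrib, add_comm _ k, hf.sum_range_comp_add, sub_self]

theorem Function.Periodic.exists_nonpos_and_nonneg_succ {α : Type*} [AddCommMonoid α]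
    [LinearOrder α] [IsOrderedCancelAddMonoid α] {d : ℕ → α} {N : ℕ} (hd : Periodic d N)
    (hN : 0 < N) (hsum : ∑ t ∈ range N, d t = 0) : ∃ i, d i ≤ 0 ∧ 0 ≤ d (i + 1) := by
  have hne : (range N).Nonempty := nonempty_range_iff.2 hN.ne'
  by_contra! hneg
  obtain ⟨i₀, hi₀⟩ : ∃ i, d i ≤ 0 := by
    by_contra! hpos
    exact (sum_pos (fun t _ => hpos t) hne).ne' hsum
  have hafter : ∀ t, d (i₀ + 1 + t) < 0 := by
    intro t
    induction t with
    | zero => exact hneg i₀ hi₀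
    | succ t ih => exact hneg _ ih.le
  have hlt := sum_neg (fun t _ => hafter t) hne
  rw [hd.sum_range_comp_add, hsum] at hlt
  exact hlt.false

theorem exists_valid_subEscher_general (U : Finset ℝ) (n k : ℕ) (hk : 1 ≤ k)
    (w : ℕ → ℝ) (hw : IsEscher U (n + k) w) :
    ∃ i, w (i + k) < w (i + 1) + 1 ∧ w i < w (i + k + 1) + 1 := by
  have hper : Periodic w (n + k) := hw.1
  have hstep := hw.2.2.2
  obtain ⟨i, hdrop, hrise⟩ := ((hper.add_const k).sub hper).exists_nonpos_and_nonneg_succ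
    (by omega) (hper.sum_range_sub_comp_add k)
  simp only [Pi.sub_apply, add_right_comm _ 1 k] at hdrop hrise
  exact ⟨i, by linarith [hstep i], by linarith [hstep i]⟩

/-- Every `(n+k)`-Escher has a valid `k`-subEscher: there is an index `i` with
`w (i+k) → w (i+1)` (so `[w (i+1), …, w (i+k)]` is a `k`-Escher) and
`w i → w (i+k+1)` (so the complementary window `[w (i+k+1), …, w i]` is an `n`-Escher). -/
theorem exists_valid_subEscher (U : Finset ℝ) (n k : ℕ) (hn : 1 ≤ n) (hk : 1 ≤ k)
    (w : ℕ → ℝ) (hw : IsEscher U (n + k) w) :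
    ∃ i, w (i + k) < w (i + 1) + 1 ∧ w i < w (i + k + 1) + 1 :=
  exists_valid_subEscher_general U n k hk w hw
end

section
/- There is no infinite sequence of reals x₀ ≺ x₁ ≺ x₂ ≺ ⋯ with all x_i lying in a fixed finite set; in particular, a cyclic pure⁻ sequence of length N = n + k in a UIO leads to a contradiction, since it produces an impossible cyclic chain with q occurrences of ≺ and q occurrences of →. -/
/-!
A sequence whose terms increase by at least `1` at every step is strictly increasing, hence
injective, so it cannot take values in a finite set. For the cyclic statement, pureness gives
`w (m + 1) < w (m + 1 + (k - 1))`, so along the progression `j ↦ 1 + j (k - 1)` the periodic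
sequence `w` increases strictly; but a periodic sequence takes only finitely many values.
-/

open Function

theorem StrictMono.not_forall_mem_finset {α : Type*} [Preorder α] {x : ℕ → α}
    (hx : StrictMono x) (S : Finset α) : ¬ ∀ i, x i ∈ S := fun hmem =>
  Set.infinite_range_of_injective hx.injective <|
    S.finite_toSet.subset <| Set.range_subset_iff.2 hmem

theorem Function.Periodic.mem_image_range {α : Type*} [DecidableEq α] {w : ℕ → α} {N : ℕ}
    (hw : Periodic w N) (hN : 0 < N) (i : ℕ) : w i ∈ (Finset.range N).image w :=
  Finset.mem_image.2 ⟨i % N, Finset.mem_range.2 (Nat.mod_lt i hN), hw.map_mod_nat i⟩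

theorem Function.Periodic.not_forall_lt_add {α : Type*} [Preorder α] {w : ℕ → α} {N : ℕ}
    (hw : Periodic w N) (hN : 0 < N) (d : ℕ) : ¬ ∀ m, w m < w (m + d) := by
  classical
  intro hlt
  have hmono : StrictMono fun j => w (j * d) :=
    strictMono_nat_of_lt_succ fun j => by simpa only [add_one_mul] using hlt (j * d)
  exact hmono.not_forall_mem_finset _ fun j => hw.mem_image_range hN (j * d)

/-- (a) There is no infinite chain `x₀ ≺ x₁ ≺ x₂ ≺ ⋯` (`x i + 1 ≤ x (i+1)`) of reals
all lying in a fixed finite set.  (b) In particular, no cyclic sequence of length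
`N = n + k` in a UIO (encoded as an `N`-periodic sequence with consecutive
`→`-relations) can be pure⁻, i.e. satisfy `w (m+1) ≺ w (m+k)` for all `m`. -/
theorem no_infinite_prec_chain :
    (∀ (S : Finset ℝ) (x : ℕ → ℝ), (∀ i, x i ∈ S) → (∀ i, x i + 1 ≤ x (i + 1)) → False) ∧
    (∀ n k : ℕ, 1 ≤ n → 1 ≤ k → ∀ w : ℕ → ℝ,
      (∀ i, w (i + (n + k)) = w i) → (∀ i, w i < w (i + 1) + 1) →
      (∀ m, w (m + 1) + 1 ≤ w (m + k)) → False) := by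
  constructor
  · intro S x hmem hstep
    exact (strictMono_nat_of_lt_succ fun i => (lt_add_one _).trans_le (hstep i))
      |>.not_forall_mem_finset S hmem
  · intro n k _ hk w hper _ hpure
    have hshift : Periodic (fun m => w (m + 1)) (n + k) := fun m => by
      simpa only [add_right_comm] using hper (m + 1)
    refine hshift.not_forall_lt_add (by omega) (k - 1) fun m => ?_
    have hidx : m + (k - 1) + 1 = m + k := by omega
    simpa only [hidx] using (lt_add_one _).trans_le (hpure m)
end

section
/- Let u be an n-Escher and v a k-Escher in a UIO, with indices read cyclically. For each index i, it is impossible that both u_i ≻ v_{i+1} and v_i ≻ u_{i+1}; hence exactly one of: (1) u_i → v_{i+1} and v_i → u_{i+1}; (2) u_i ≻ v_{i+1} and v_i → u_{i+1}; (3) u_i → v_{i+1} and v_i ≻ u_{i+1}. -/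
theorem IsEscher.lt_succ_add_one {U : Finset ℝ} {m : ℕ} {w : ℕ → ℝ} (hw : IsEscher U m w)
    (i : ℕ) : w i < w (i + 1) + 1 :=
  hw.2.2.2 i

theorem not_add_le_and_add_le_of_lt_add {α : Type*} [AddCommMonoid α] [PartialOrder α]
    [IsOrderedCancelAddMonoid α] {a a' b b' c : α} (ha : a < a' + c) (hb : b < b' + c) :
    ¬(b' + c ≤ a ∧ a' + c ≤ b) := by
  rintro ⟨hba, hab⟩
  have hlt : b' + c + (a' + c) < a' + c + (b' + c) :=
    (add_le_add hba hab).trans_lt (add_lt_add ha hb)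
  exact hlt.ne (add_comm _ _)

theorem lt_and_lt_or_le_and_lt_or_lt_and_le_of_not_le_and_le {α β : Type*} [LinearOrder α]
    [LinearOrder β] {a b : α} {c d : β} (h : ¬(b ≤ a ∧ d ≤ c)) :
    (a < b ∧ c < d) ∨ (b ≤ a ∧ c < d) ∨ (a < b ∧ d ≤ c) := by
  rcases lt_or_ge a b with hab | hba <;> rcases lt_or_ge c d with hcd | hdc
  · exact Or.inl ⟨hab, hcd⟩
  · exact Or.inr (Or.inr ⟨hab, hdc⟩)
  · exact Or.inr (Or.inl ⟨hba, hcd⟩)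
  · exact absurd ⟨hba, hdc⟩ h

theorem insertion_trichotomy_general (U : Finset ℝ) (n k : ℕ)
    (u v : ℕ → ℝ) (hu : IsEscher U n u) (hv : IsEscher U k v) (i : ℕ) :
    ¬(v (i + 1) + 1 ≤ u i ∧ u (i + 1) + 1 ≤ v i) ∧
    ((u i < v (i + 1) + 1 ∧ v i < u (i + 1) + 1) ∨
     (v (i + 1) + 1 ≤ u i ∧ v i < u (i + 1) + 1) ∨
     (u i < v (i + 1) + 1 ∧ u (i + 1) + 1 ≤ v i)) := by
  have h_not_both :=
    not_add_le_and_add_le_of_lt_add (hu.lt_succ_add_one i) (hv.lt_succ_add_one i)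
  exact ⟨h_not_both, lt_and_lt_or_le_and_lt_or_lt_and_le_of_not_le_and_le h_not_both⟩

/-- For an `n`-Escher `u` and a `k`-Escher `v` in a UIO and any index `i`, it is
impossible that both `u i ≻ v (i+1)` and `v i ≻ u (i+1)`; hence exactly one of:
(1) `u i → v (i+1)` and `v i → u (i+1)`; (2) `u i ≻ v (i+1)` and `v i → u (i+1)`;
(3) `u i → v (i+1)` and `v i ≻ u (i+1)`. -/
theorem insertion_trichotomy (U : Finset ℝ) (n k : ℕ) (hn : 1 ≤ n) (hk : 1 ≤ k)
    (u v : ℕ → ℝ) (hu : IsEscher U n u) (hv : IsEscher U k v) (i : ℕ) :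
    ¬(v (i + 1) + 1 ≤ u i ∧ u (i + 1) + 1 ≤ v i) ∧
    ((u i < v (i + 1) + 1 ∧ v i < u (i + 1) + 1) ∨
     (v (i + 1) + 1 ≤ u i ∧ v i < u (i + 1) + 1) ∨
     (u i < v (i + 1) + 1 ∧ u (i + 1) + 1 ≤ v i)) :=
  insertion_trichotomy_general U n k u v hu hv i
end

section
/- Conversely, if w is an (n+k)-Escher and i is an index such that [w_{i+1},…,w_{i+k}] is a valid k-subEscher (i.e., w_{i+k} → w_{i+1} and w_i → w_{i+k+1}), then setting v = [w_{i+1},…,w_{i+k}] and u = [w_{i+k+1},…,w_i], the pair (u, v) has a valid insertion that splices back to w. -/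
theorem Function.Periodic.apply_mul_sub_one {α : Type*} {f : ℕ → α} {p : ℕ}
    (hf : Function.Periodic f p) {q : ℕ} (hq : 0 < q) : f (q * p - 1) = f (p - 1) := by
  obtain ⟨q, rfl⟩ := Nat.exists_eq_add_one.mpr hq
  rcases Nat.eq_zero_or_pos p with rfl | hp
  · simp
  · have hshift : f (p - 1 + q * p) = f (p - 1) := hf.nat_mul q (p - 1)
    rw [← hshift, add_one_mul]
    congr 1
    omega

namespace IsEscher

variable {U : Finset ℝ} {m : ℕ} {w : ℕ → ℝ}

theorem periodic (hw : IsEscher U m w) : Function.Periodic w m := hw.1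

theorem mem (hw : IsEscher U m w) (i : ℕ) : w i ∈ U := hw.2.1 i

theorem arrow (hw : IsEscher U m w) (i : ℕ) : w i < w (i + 1) + 1 := hw.2.2.2 i

theorem eq_of_apply_add_eq (hw : IsEscher U m w) (c : ℕ) {a b : ℕ} (ha : a < m) (hb : b < m)
    (h : w (c + a) = w (c + b)) : a = b := by
  have hm : 0 < m := by omega
  have hmod : (c + a) % m = (c + b) % m :=
    hw.2.2.1 _ _ (Nat.mod_lt _ hm) (Nat.mod_lt _ hm)
      (by rw [hw.periodic.map_mod_nat, hw.periodic.map_mod_nat, h])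
  have := Nat.ModEq.add_left_cancel' c hmod
  rwa [Nat.ModEq, Nat.mod_eq_of_lt ha, Nat.mod_eq_of_lt hb] at this

theorem of_window {c p : ℕ} (hmem : ∀ i, w i ∈ U) (harr : ∀ i, w i < w (i + 1) + 1)
    (hwrap : w (c + (p - 1)) < w c + 1)
    (hinj : ∀ a b, a < p → b < p → w (c + a) = w (c + b) → a = b)
    {x : ℕ → ℝ} (hx : ∀ j, x j = w (c + j % p)) : IsEscher U p x := by
  refine ⟨fun j => by rw [hx, hx, Nat.add_mod_right], fun j => hx j ▸ hmem _, ?_, ?_⟩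
  · intro a b ha hb hab
    rw [hx, hx, Nat.mod_eq_of_lt ha, Nat.mod_eq_of_lt hb] at hab
    exact hinj a b ha hb hab
  · intro j
    rcases Nat.eq_zero_or_pos p with rfl | hp
    · simpa [hx, add_assoc] using harr (c + j)
    rw [hx, hx, ← Nat.mod_add_mod]
    rcases (Nat.add_one_le_of_lt (Nat.mod_lt j hp)).lt_or_eq with hlt | hlast
    · rw [Nat.mod_eq_of_lt hlt, ← add_assoc]
      exact harr _
    · rw [hlast, Nat.mod_self, add_zero, show j % p = p - 1 by omega]
      exact hwrap

end IsEscher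

/-- If `w` is an `(n+k)`-Escher and `[w (i+1), …, w (i+k)]` is a valid `k`-subEscher
(`w (i+k) → w (i+1)` and `w i → w (i+k+1)`), then `v = [w (i+1), …, w (i+k)]` is a
`k`-Escher, `u = [w (i+k+1), …, w i]` is an `n`-Escher, and the pair `(u, v)` has a
valid insertion `j` whose splice is `w` again (up to rotation). -/
theorem subEscher_splices_back (U : Finset ℝ) (n k : ℕ) (hn : 1 ≤ n) (hk : 1 ≤ k)
    (w : ℕ → ℝ) (hw : IsEscher U (n + k) w) (i : ℕ)
    (hsub : w (i + k) < w (i + 1) + 1 ∧ w i < w (i + k + 1) + 1)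
    (u v : ℕ → ℝ)
    (hu : ∀ j, u j = w (i + k + 1 + j % n))
    (hv : ∀ j, v j = w (i + 1 + j % k)) :
    IsEscher U n u ∧ IsEscher U k v ∧
    ∃ j, (u j < v (j + 1) + 1 ∧ v j < u (j + 1) + 1) ∧
      ∃ t, ∀ a < n + k,
        (if a < n then u (j + 1 + a) else v (j + 1 + (a - n))) = w (t + a) := by
  have hu_escher : IsEscher U n u :=
    .of_window hw.mem hw.arrow
      (by rw [show i + k + 1 + (n - 1) = i + (n + k) by omega, hw.periodic]; exact hsub.2)
      (fun a b ha hb => hw.eq_of_apply_add_eq _ (by omega) (by omega)) hu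
  have hv_escher : IsEscher U k v :=
    .of_window hw.mem hw.arrow (by rw [show i + 1 + (k - 1) = i + k by omega]; exact hsub.1)
      (fun a b ha hb => hw.eq_of_apply_add_eq _ (by omega) (by omega)) hv
  have hj : n * k - 1 + 1 = n * k := Nat.sub_add_cancel (Nat.mul_pos hn hk)
  have hu_shift (a : ℕ) : u (n * k + a) = u a := by
    rw [add_comm, mul_comm]; exact hu_escher.periodic.nat_mul k a
  have hv_shift (a : ℕ) : v (n * k + a) = v a := by
    rw [add_comm]; exact hv_escher.periodic.nat_mul n a
  refine ⟨hu_escher, hv_escher, n * k - 1, ⟨?_, ?_⟩, i + k + 1, fun a ha => ?_⟩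
  · rw [hj, mul_comm, hu_escher.periodic.apply_mul_sub_one hk, mul_comm, ← add_zero (n * k),
      hv_shift, hu, hv, Nat.mod_eq_of_lt (by omega),
      show i + k + 1 + (n - 1) = i + (n + k) by omega, hw.periodic]
    simpa using hw.arrow i
  · rw [hj, hv_escher.periodic.apply_mul_sub_one hn, ← add_zero (n * k), hu_shift, hu, hv,
      Nat.mod_eq_of_lt (by omega), show i + 1 + (k - 1) = i + k by omega]
    simpa using hw.arrow (i + k)
  · rw [hj]
    split_ifs with h
    · rw [hu_shift, hu, Nat.mod_eq_of_lt h]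
    · rw [hv_shift, hv, Nat.mod_eq_of_lt (by omega),
        show i + k + 1 + a = i + 1 + (a - n) + (n + k) by omega, hw.periodic]
end

section
/- Let (u, v) be an (n-Escher, k-Escher) pair with gcd(n,k) = 1, and let κ₁ and κ₂ be two consecutive valid insertions, with κ₁ after index j and κ₂ after index j + r where r ≤ n. Then the sequence u_j → u_{j+1} → ⋯ → u_{j+r} → v_{j+r+1} → ⋯ → v_{j+r+k} is not pure: it contains a valid k-subEscher. -/
/-- `w 0 → w 1 → w 2 → ⋯`, where `a → b` means `a < b + 1`. -/
def IsArrowPath (w : ℕ → ℝ) : Prop :=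
  ∀ i, w i < w (i + 1) + 1

def IsValidSubEscherAt (w : ℕ → ℝ) (k m : ℕ) : Prop :=
  w (m + k) < w (m + 1) + 1 ∧ w m < w (m + k + 1) + 1

theorem exists_climb_past {w : ℕ → ℝ} {d N : ℕ} (hd : 0 < d)
    (hstep : ∀ i < N, w i + 1 ≤ w (i + d)) (s : ℕ) :
    ∃ t : ℕ, N ≤ s + t * d ∧ w s + t ≤ w (s + t * d) := by
  by_cases hs : N ≤ s
  · exact ⟨0, by simpa using hs, by simp⟩
  obtain ⟨t, hN, ht⟩ := exists_climb_past hd hstep (s + d)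
  have hs_step := hstep s (by omega)
  refine ⟨t + 1, by linarith, ?_⟩
  rw [show s + (t + 1) * d = s + d + t * d by ring]
  push_cast
  linarith
termination_by N - s

namespace IsArrowPath

variable {w : ℕ → ℝ}

theorem le_add (hw : IsArrowPath w) (a s : ℕ) : w a ≤ w (a + s) + s := by
  induction s with
  | zero => simp
  | succ s ih =>
    rw [← add_assoc]
    push_cast
    linarith [hw (a + s)]

theorem lt_add (hw : IsArrowPath w) (a : ℕ) {s : ℕ} (hs : 0 < s) : w a < w (a + s) + s := by
  obtain ⟨s, rfl⟩ := Nat.exists_eq_add_of_lt hs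
  have htail := hw.le_add (a + 1) s
  rw [show a + (0 + s + 1) = a + 1 + s by ring]
  push_cast
  linarith [hw a]

theorem splice {u v W : ℕ → ℝ} {j r : ℕ} (hu : IsArrowPath u) (hv : IsArrowPath v)
    (hjoin : u (j + r) < v (j + r + 1) + 1)
    (hW : ∀ m, W m = if m ≤ r then u (j + m) else v (j + m)) : IsArrowPath W := by
  intro m
  rw [hW, hW]
  split_ifs with h₁ h₂ h₂
  · exact hu (j + m)
  · obtain rfl : m = r := by omega
    exact hjoin
  · omega
  · exact hv (j + m)

/-- An ascent `w (m + 1) ≻ w (m + k)` cannot be followed by a descent `w (m + k + 2) ≺ w (m + 1)`,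
nor a descent by an ascent, as either would give `w a ≥ w (a + 2) + 2`. -/
theorem forall_ascent_or_forall_descent (hw : IsArrowPath w) {k r : ℕ}
    (hfail : ∀ m < r, ¬IsValidSubEscherAt w k m) :
    (∀ m < r, w (m + 1) + 1 ≤ w (m + k)) ∨ (∀ m < r, w (m + k + 1) + 1 ≤ w m) := by
  have hsplit : ∀ m < r, w (m + 1) + 1 ≤ w (m + k) ∨ w (m + k + 1) + 1 ≤ w m := by
    intro m hm
    by_contra! h
    exact hfail m hm h
  rcases Nat.eq_zero_or_pos r with rfl | hr
  · simp
  rcases hsplit 0 hr with h₀ | h₀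
  · left
    intro m hm
    induction m with
    | zero => exact h₀
    | succ m ih =>
      refine (hsplit _ hm).resolve_right fun hdesc => ?_
      have htwo : w (m + k) < w (m + k + 2) + 2 := by exact_mod_cast hw.lt_add (m + k) two_pos
      rw [show m + 1 + k + 1 = m + k + 2 by ring] at hdesc
      linarith [ih (by omega)]
  · right
    intro m hm
    induction m with
    | zero => exact h₀
    | succ m ih =>
      refine (hsplit _ hm).resolve_left fun hasc => ?_
      have htwo : w m < w (m + 2) + 2 := by exact_mod_cast hw.lt_add m two_pos
      rw [show m + 1 + k = m + k + 1 by ring] at hasc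
      linarith [ih (by omega)]

end IsArrowPath

section Splice

variable {W v : ℕ → ℝ} {k j r : ℕ}

/-- After `t` ascents of length `k - 1` from index `1` the index is `t - 1` short of a multiple
of `k`, so `t - 1` arrows of `v` lead back to `v j`, against a gain of `t`. -/
theorem not_forall_ascent_of_splice (hk : 1 ≤ k) (hr : 1 ≤ r)
    (hv : IsArrowPath v) (hvk : Function.Periodic v k) (hWv : ∀ m, r < m → W m = v (j + m))
    (hjoin : v j < W 1 + 1) : ¬∀ m < r, W (m + 1) + 1 ≤ W (m + k) := by
  intro hasc
  obtain ⟨d, rfl⟩ := Nat.exists_eq_add_of_le' hk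
  rcases Nat.eq_zero_or_pos d with rfl | hd
  · linarith [hasc 0 hr]
  obtain ⟨t, hpast, hclimb⟩ := exists_climb_past (w := fun i => W (i + 1)) hd
    (fun i hi => by simpa [add_right_comm i 1 d, add_assoc] using hasc i hi) 0
  obtain ⟨t, rfl⟩ : ∃ t', t = t' + 1 := Nat.exists_eq_succ_of_ne_zero (by rintro rfl; omega)
  simp only [zero_add] at hpast hclimb
  have hend : W ((t + 1) * d + 1) = v (j + ((t + 1) * d + 1)) := hWv _ (by omega)
  have hback : v (j + ((t + 1) * d + 1) + t) = v j := by
    rw [show j + ((t + 1) * d + 1) + t = j + (t + 1) • (d + 1) by simp only [smul_eq_mul]; ring]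
    exact hvk.nsmul _ j
  have hreturn := hv.le_add (j + ((t + 1) * d + 1)) t
  push_cast at hclimb
  linarith

/-- After `t` descents of length `k + 1` from index `0` the index is `t - 1` past `1` modulo `k`,
so `t - 1` arrows of `v` lead there from `v (j + 1)`, against a loss of `t`. -/
theorem not_forall_descent_of_splice (hk : 1 ≤ k) (hr : 1 ≤ r) (hW : IsArrowPath W)
    (hv : IsArrowPath v) (hvk : Function.Periodic v k) (hWv : ∀ m, r < m → W m = v (j + m))
    (hjoin : W 0 < v (j + 1) + 1) : ¬∀ m < r, W (m + k + 1) + 1 ≤ W m := by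
  intro hdesc
  obtain ⟨t, hpast, hfall⟩ := exists_climb_past (w := fun i => -W i) (by omega : 0 < k + 1)
    (fun i hi => by rw [← add_assoc]; linarith [hdesc i hi]) 0
  simp only [zero_add] at hpast hfall
  obtain ⟨t, rfl⟩ : ∃ t', t = t' + 1 := Nat.exists_eq_succ_of_ne_zero (by rintro rfl; omega)
  obtain ⟨e, hre, hWe, hper⟩ : ∃ e, r < e ∧ W e + (t + 1) ≤ W 0 ∧ ∃ c, e = t + 1 + c • k := by
    rcases hpast.lt_or_eq with hlt | heq
    · exact ⟨(t + 1) * (k + 1), hlt, by push_cast at hfall; linarith, t + 1, by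
        simp only [smul_eq_mul]; ring⟩
    · -- The fall lands exactly on `r`, still in the `u`-part; one more descent reaches `W (r + k)`.
      have hlast := hdesc (r - 1) (by omega)
      rw [show r - 1 + k + 1 = r + k by omega] at hlast
      have harrow := hW (r - 1)
      rw [show r - 1 + 1 = r by omega, heq] at harrow
      rw [heq] at hlast
      refine ⟨(t + 1) * (k + 1) + k, by omega, by push_cast at hfall; linarith, t + 2, by
        simp only [smul_eq_mul]; ring⟩
  obtain ⟨c, rfl⟩ := hper
  have hback : v (j + 1 + t) = v (j + (t + 1 + c • k)) := by
    rw [show j + (t + 1 + c • k) = j + 1 + t + c • k by ring]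
    exact (hvk.nsmul c _).symm
  have hreturn := hv.le_add (j + 1) t
  rw [hWv _ hre] at hWe
  linarith

end Splice

theorem consecutive_insertions_not_pure_general (U : Finset ℝ) (n k : ℕ)
    (hk : 1 ≤ k)
    (u v : ℕ → ℝ) (hu : IsEscher U n u) (hv : IsEscher U k v)
    (j r : ℕ) (hr : 1 ≤ r)
    (hins1 : u j < v (j + 1) + 1 ∧ v j < u (j + 1) + 1)
    (hins2 : u (j + r) < v (j + r + 1) + 1 ∧ v (j + r) < u (j + r + 1) + 1)
    (W : ℕ → ℝ) (hW : ∀ m, W m = if m ≤ r then u (j + m) else v (j + m)) :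
    ∃ m, m < r ∧ (W (m + k) < W (m + 1) + 1 ∧ W m < W (m + k + 1) + 1) := by
  obtain ⟨-, -, -, hu_arrow⟩ := hu
  obtain ⟨hv_per, -, -, hv_arrow⟩ := hv
  have hWpath : IsArrowPath W := IsArrowPath.splice hu_arrow hv_arrow hins2.1 hW
  have hWv : ∀ m, r < m → W m = v (j + m) := fun m hm => by rw [hW, if_neg (by omega)]
  by_contra hpure
  have hfail : ∀ m < r, ¬IsValidSubEscherAt W k m := fun m hm hvalid => hpure ⟨m, hm, hvalid⟩
  rcases hWpath.forall_ascent_or_forall_descent hfail with hasc | hdesc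
  · refine not_forall_ascent_of_splice hk hr hv_arrow hv_per hWv ?_ hasc
    rw [hW, if_pos hr]
    exact hins1.2
  · refine not_forall_descent_of_splice hk hr hWpath hv_arrow hv_per hWv ?_ hdesc
    rw [hW, if_pos (Nat.zero_le r)]
    exact hins1.1

/-- Main proposition: if `κ₁` (after index `j`) and `κ₂` (after index `j + r`, `r ≤ n`)
are two consecutive valid insertions of an (`n`-Escher, `k`-Escher) pair `(u, v)` with
`gcd n k = 1`, then the sequence
`u j → u (j+1) → ⋯ → u (j+r) → v (j+r+1) → ⋯ → v (j+r+k)` is not pure: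
it contains a valid `k`-subEscher. -/
theorem consecutive_insertions_not_pure (U : Finset ℝ) (n k : ℕ)
    (hk : 1 ≤ k) (hkn : k ≤ n) (hcop : Nat.gcd n k = 1)
    (u v : ℕ → ℝ) (hu : IsEscher U n u) (hv : IsEscher U k v)
    (j r : ℕ) (hr : 1 ≤ r) (hrn : r ≤ n)
    (hins1 : u j < v (j + 1) + 1 ∧ v j < u (j + 1) + 1)
    (hins2 : u (j + r) < v (j + r + 1) + 1 ∧ v (j + r) < u (j + r + 1) + 1)
    (hconsec : ∀ t, j < t → t < j + r →
      ¬(u t < v (t + 1) + 1 ∧ v t < u (t + 1) + 1))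
    (W : ℕ → ℝ) (hW : ∀ m, W m = if m ≤ r then u (j + m) else v (j + m)) :
    ∃ m, m < r ∧ (W (m + k) < W (m + 1) + 1 ∧ W m < W (m + k + 1) + 1) :=
  consecutive_insertions_not_pure_general U n k hk u v hu hv j r hr hins1 hins2 W hW
end

section
/- A pure⁻ sequence u_0 → u_1 → ⋯ → u_r → v_{r+1} → ⋯ → v_{r+k} arising from two consecutive valid insertions of an (n-Escher, k-Escher) pair yields the chain u_1 ≺ u_k ≺ u_{2(k−1)+1} ≺ ⋯ ≺ u_{(q−1)(k−1)+1} ≺ v_{q(k−1)+1} → v_{q(k−1)+2} → ⋯ → v_{qk} = v_0 → u_1, which is a contradictory cyclic chain (q occurrences of ≺ and q of →). -/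
theorem nsmul_le_sub_of_forall_le_sub_succ {G : Type*} [AddCommGroup G] [PartialOrder G]
    [IsOrderedAddMonoid G] {f : ℕ → G} {c : G} {q : ℕ} (h : ∀ j < q, c ≤ f (j + 1) - f j) :
    q • c ≤ f q - f 0 := by
  rw [← Finset.sum_range_sub]
  simpa using Finset.card_nsmul_le_sum (Finset.range q) _ c fun j hj ↦ h j (Finset.mem_range.mp hj)

theorem IsEscher.le_add_nat {U : Finset ℝ} {m : ℕ} {w : ℕ → ℝ} (hw : IsEscher U m w) (i j : ℕ) :
    w i ≤ w (i + j) + j := by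
  have := nsmul_le_sub_of_forall_le_sub_succ (f := fun j ↦ w (i + j)) (c := -1) (q := j)
    fun l _ ↦ show -1 ≤ w (i + l + 1) - w (i + l) by linarith [hw.2.2.2 (i + l)]
  simp only [nsmul_eq_mul, add_zero] at this
  linarith

theorem IsEscher.apply_mul_eq_apply_zero {U : Finset ℝ} {m : ℕ} {w : ℕ → ℝ}
    (hw : IsEscher U m w) (t : ℕ) : w (t * m) = w 0 :=
  Function.Periodic.nat_mul_eq hw.1 t

theorem exists_mul_add_one_le_lt {d r : ℕ} (hd : 0 < d) (hr : 1 ≤ r) :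
    ∃ p, p * d + 1 ≤ r ∧ r < (p + 1) * d + 1 :=
  ⟨(r - 1) / d, by
    have := Nat.div_mul_le_self (r - 1) d
    have := Nat.lt_div_mul_add (a := r - 1) hd
    rw [add_mul, one_mul]
    omega⟩

theorem pure_minus_contradiction_general (U : Finset ℝ) (k r : ℕ)
    (hk : 1 ≤ k) (hr : 1 ≤ r)
    (u v : ℕ → ℝ) (hv : IsEscher U k v)
    (hins : u 0 < v 1 + 1 ∧ v 0 < u 1 + 1)
    (W : ℕ → ℝ) (hW : ∀ m, W m = if m ≤ r then u m else v m)
    (hpureminus : ∀ m, m + k + 1 ≤ r + k → W (m + 1) + 1 ≤ W (m + k)) :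
    False := by
  obtain ⟨d, rfl⟩ : ∃ d, k = d + 1 := ⟨k - 1, by omega⟩
  rcases Nat.eq_zero_or_pos d with rfl | hd
  · linarith [hpureminus 0 (by omega)]
  obtain ⟨p, hp, hrp⟩ := exists_mul_add_one_le_lt hd hr
  have ascent : W 1 + (p + 1 : ℕ) ≤ W ((p + 1) * d + 1) := by
    have := nsmul_le_sub_of_forall_le_sub_succ (f := fun j ↦ W (j * d + 1)) (c := 1) (q := p + 1)
      fun j hj ↦ by
        have hjd : j * d ≤ p * d := Nat.mul_le_mul_right d (by omega)
        have := hpureminus (j * d) (by omega)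
        rw [show j * d + (d + 1) = (j + 1) * d + 1 by ring] at this
        linarith
    simp only [nsmul_eq_mul, mul_one, zero_mul, zero_add] at this
    linarith
  have descent := hv.le_add_nat ((p + 1) * d + 1) p
  rw [show (p + 1) * d + 1 + p = (p + 1) * (d + 1) by ring, hv.apply_mul_eq_apply_zero] at descent
  rw [hW, if_pos hr, hW, if_neg (by omega)] at ascent
  push_cast at ascent
  linarith [hins.2]

/-- The pure⁻ case is contradictory: if the sequence
`u 0 → u 1 → ⋯ → u r → v (r+1) → ⋯ → v (r+k)` arising from a valid insertion at index
`0` of an (`n`-Escher, `k`-Escher) pair is pure⁻ (i.e. `W (m+1) ≺ W (m+k)` for every `m`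
in range), then one obtains the contradictory cyclic chain
`u 1 ≺ u k ≺ u (2(k-1)+1) ≺ ⋯ ≺ u ((q-1)(k-1)+1) ≺ v (q(k-1)+1) → ⋯ → v (qk) = v 0 → u 1`
with `q` occurrences of `≺` and `q` of `→`; hence `False`. -/
theorem pure_minus_contradiction (U : Finset ℝ) (n k r : ℕ)
    (hk : 1 ≤ k) (hkn : k ≤ n) (hr : 1 ≤ r) (hrn : r ≤ n)
    (u v : ℕ → ℝ) (hu : IsEscher U n u) (hv : IsEscher U k v)
    (hins : u 0 < v 1 + 1 ∧ v 0 < u 1 + 1)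
    (W : ℕ → ℝ) (hW : ∀ m, W m = if m ≤ r then u m else v m)
    (hpureminus : ∀ m, m + k + 1 ≤ r + k → W (m + 1) + 1 ≤ W (m + k)) :
    False :=
  pure_minus_contradiction_general U k r hk hr u v hv hins W hW hpureminus
end
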